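/- Let s ≥ 1 be an integer and let f : ∂D → ℝ be continuous, vanishing at exactly 2s points with alternating signs. Define the Fourier coefficients A_j = (1/π) ∫_{−π}^{π} f(e^{iθ}) cos(jθ) dθ and B_j = (1/π) ∫_{−π}^{π} f(e^{iθ}) sin(jθ) dθ. If A_j = 0 for j = 0, 1, …, s − 1 and B_j = 0 for j = 1, …, s − 1, then (A_s, B_s) ≠ (0, 0). -/

import Mathlib

noncomputable section

/-- The restriction of `f` to the unit circle vanishes at exactly `2*s` points and has
alternating strict signs on the `2*s` open arcs determined by these zeros. -/
def AltBoundary (f : ℂ → ℝ) (s : ℕ) : Prop :=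
  ∃ (t : ℕ → ℝ) (ε : ℝ), (ε = 1 ∨ ε = -1) ∧
    (∀ k < 2 * s, t k < t (k + 1)) ∧
    t (2 * s) = t 0 + 2 * Real.pi ∧
    (∀ k < 2 * s, f (Complex.exp (Complex.I * (t k : ℂ))) = 0) ∧
    (∀ k < 2 * s, ∀ θ ∈ Set.Ioo (t k) (t (k + 1)),
      0 < ε * (-1 : ℝ) ^ k * f (Complex.exp (Complex.I * (θ : ℂ))))

/-- The `j`-th cosine Fourier coefficient of `f` on the unit circle. -/
def fourierA (f : ℂ → ℝ) (j : ℕ) : ℝ :=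
  (1 / Real.pi) * ∫ θ in (-Real.pi)..Real.pi,
    f (Complex.exp (Complex.I * (θ : ℂ))) * Real.cos (j * θ)

/-- The `j`-th sine Fourier coefficient of `f` on the unit circle. -/
def fourierB (f : ℂ → ℝ) (j : ℕ) : ℝ :=
  (1 / Real.pi) * ∫ θ in (-Real.pi)..Real.pi,
    f (Complex.exp (Complex.I * (θ : ℂ))) * Real.sin (j * θ)


lemma contF (f : ℂ → ℝ) (hcont : ContinuousOn f (Metric.sphere (0:ℂ) 1)) :
    Continuous (fun θ : ℝ => f (Complex.exp (Complex.I * (θ:ℂ)))) := by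
  apply hcont.comp_continuous
    (Complex.continuous_exp.comp (continuous_const.mul Complex.continuous_ofReal))
  intro x
  simp [Metric.mem_sphere, Complex.dist_eq, Complex.norm_exp]

lemma periodicExp : ∀ θ : ℝ, Complex.exp (Complex.I * ((θ + 2*Real.pi : ℝ):ℂ)) =
    Complex.exp (Complex.I * (θ:ℂ)) := by
  intro θ
  have : Complex.I * ((θ + 2*Real.pi : ℝ):ℂ) = Complex.I * θ + 2*Real.pi*Complex.I := by
    push_cast; ring
  rw [this, Complex.exp_add, Complex.exp_two_pi_mul_I, mul_one]


lemma sinFactor (θ a : ℝ) :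
    ((Real.sin ((θ - a)/2) : ℝ) : ℂ) =
      (Complex.exp (Complex.I * θ) - Complex.exp (Complex.I * a)) *
        Complex.exp (-(Complex.I) * (((θ + a)/2 : ℝ):ℂ)) * (1 / (2 * Complex.I)) := by
  rw [Complex.ofReal_sin]
  rw [Complex.sin]
  rw [show (Complex.exp (Complex.I * θ) - Complex.exp (Complex.I * a)) *
        Complex.exp (-(Complex.I) * (((θ + a)/2 : ℝ):ℂ)) =
      Complex.exp (Complex.I * θ + (-(Complex.I) * (((θ + a)/2 : ℝ):ℂ))) -
      Complex.exp (Complex.I * a + (-(Complex.I) * (((θ + a)/2 : ℝ):ℂ))) by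
    rw [Complex.exp_add, Complex.exp_add]; ring]
  rw [show Complex.I * θ + (-(Complex.I) * (((θ + a)/2 : ℝ):ℂ)) =
      -(((θ - a)/2 : ℝ):ℂ) * Complex.I * (-1) by push_cast; ring]
  rw [show Complex.I * a + (-(Complex.I) * (((θ + a)/2 : ℝ):ℂ)) =
      (((θ - a)/2 : ℝ):ℂ) * Complex.I * (-1) by push_cast; ring]
  have hI : Complex.I ≠ 0 := Complex.I_ne_zero
  rw [show (-(((θ - a)/2 : ℝ):ℂ) * Complex.I * (-1)) = ((((θ - a)/2 : ℝ):ℂ)) * Complex.I by ring]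
  rw [show ((((θ - a)/2 : ℝ):ℂ) * Complex.I * (-1)) = (-(((θ - a)/2 : ℝ):ℂ)) * Complex.I by ring]
  field_simp
  rw [Complex.I_sq]
  ring

lemma prodExpand (n : ℕ) (t : ℕ → ℝ) (θ : ℝ) :
    ((∏ k ∈ Finset.range n, Real.sin ((θ - t k)/2) : ℝ) : ℂ) =
      Complex.exp (-(Complex.I) * (((∑ k ∈ Finset.range n, t k : ℝ)):ℂ) / 2)
      * (1/(2*Complex.I))^n
      * Complex.exp (-(Complex.I) * (n/2 : ℂ) * θ) *
      ∏ k ∈ Finset.range n, (Complex.exp (Complex.I * θ) - Complex.exp (Complex.I * (t k))) := by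
  rw [Complex.ofReal_prod]
  rw [Finset.prod_congr rfl (fun k _ => sinFactor θ (t k))]
  rw [Finset.prod_mul_distrib, Finset.prod_mul_distrib, Finset.prod_const, Finset.card_range]
  rw [← Complex.exp_sum]
  have hsum : ∑ k ∈ Finset.range n, (-(Complex.I) * (((θ + t k)/2 : ℝ):ℂ)) =
      -(Complex.I) * (((∑ k ∈ Finset.range n, t k : ℝ)):ℂ)/2 + -(Complex.I)*(n/2:ℂ)*θ := by
    rw [Finset.sum_congr rfl (fun k _ => show (-(Complex.I) * (((θ + t k)/2 : ℝ):ℂ)) =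
        (-(Complex.I)*(θ:ℂ)/2) + (-(Complex.I)/2) * ((t k : ℝ):ℂ) by push_cast; ring)]
    rw [Finset.sum_add_distrib, Finset.sum_const, Finset.card_range, ← Finset.mul_sum,
      ← Complex.ofReal_sum]
    ring
  rw [hsum, Complex.exp_add]
  ring

lemma integralZeroExp (F : ℝ → ℝ) (hF : Continuous F) (s : ℕ)
    (hA : ∀ j : ℕ, j ≤ s → ∫ θ in (-Real.pi)..Real.pi, F θ * Real.cos (j*θ) = 0)
    (hB : ∀ j : ℕ, j ≤ s → ∫ θ in (-Real.pi)..Real.pi, F θ * Real.sin (j*θ) = 0)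
    (j : ℤ) (hj : j.natAbs ≤ s) :
    ∫ θ in (-Real.pi)..Real.pi, (F θ : ℂ) * Complex.exp (Complex.I * j * θ) = 0 := by
  set n := j.natAbs with hn
  have h1 : ∫ θ in (-Real.pi)..Real.pi, F θ * Real.cos ((j:ℝ)*θ) = 0 := by
    rcases Int.natAbs_eq j with h | h
    · have : ∀ θ:ℝ, Real.cos ((j:ℝ)*θ) = Real.cos ((n:ℝ)*θ) := by
        intro θ; rw [h, Int.cast_natCast]
      simp_rw [this]; exact hA n hj
    · have : ∀ θ:ℝ, Real.cos ((j:ℝ)*θ) = Real.cos ((n:ℝ)*θ) := by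
        intro θ; rw [h, Int.cast_neg, Int.cast_natCast, neg_mul, Real.cos_neg]
      simp_rw [this]; exact hA n hj
  have h2 : ∫ θ in (-Real.pi)..Real.pi, F θ * Real.sin ((j:ℝ)*θ) = 0 := by
    rcases Int.natAbs_eq j with h | h
    · have : ∀ θ:ℝ, Real.sin ((j:ℝ)*θ) = Real.sin ((n:ℝ)*θ) := by
        intro θ; rw [h, Int.cast_natCast]
      simp_rw [this]; exact hB n hj
    · have : ∀ θ:ℝ, Real.sin ((j:ℝ)*θ) = -Real.sin ((n:ℝ)*θ) := by
        intro θ; rw [h, Int.cast_neg, Int.cast_natCast, neg_mul, Real.sin_neg]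
      simp_rw [this, mul_neg, intervalIntegral.integral_neg]
      rw [hB n hj, neg_zero]
  have hpt : ∀ θ:ℝ, (F θ : ℂ) * Complex.exp (Complex.I * j * θ) =
      (((F θ * Real.cos ((j:ℝ)*θ)) : ℝ):ℂ)
        + (((F θ * Real.sin ((j:ℝ)*θ)) : ℝ):ℂ) * Complex.I := by
    intro θ
    rw [show Complex.I * (j:ℂ) * (θ:ℂ) = ((((j:ℝ)*θ : ℝ)):ℂ) * Complex.I by push_cast; ring,
      Complex.exp_mul_I, ← Complex.ofReal_cos, ← Complex.ofReal_sin]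
    push_cast; ring
  simp_rw [hpt]
  have hint1 : IntervalIntegrable (fun θ:ℝ => (((F θ * Real.cos ((j:ℝ)*θ)) : ℝ):ℂ))
      MeasureTheory.volume (-Real.pi) Real.pi :=
    (Complex.continuous_ofReal.comp (hF.mul
      (Real.continuous_cos.comp (continuous_const.mul continuous_id)))).intervalIntegrable _ _
  have hint2 : IntervalIntegrable (fun θ:ℝ => (((F θ * Real.sin ((j:ℝ)*θ)) : ℝ):ℂ) * Complex.I)
      MeasureTheory.volume (-Real.pi) Real.pi :=
    ((Complex.continuous_ofReal.comp (hF.mul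
      (Real.continuous_sin.comp (continuous_const.mul continuous_id)))).mul
        continuous_const).intervalIntegrable _ _
  rw [intervalIntegral.integral_add hint1 hint2, intervalIntegral.integral_mul_const,
    intervalIntegral.integral_ofReal, intervalIntegral.integral_ofReal, h1, h2]
  simp

lemma keyIntegralZero (F : ℝ → ℝ) (hF : Continuous F) (s : ℕ) (t : ℕ → ℝ)
    (hA : ∀ j : ℕ, j ≤ s → ∫ θ in (-Real.pi)..Real.pi, F θ * Real.cos (j*θ) = 0)
    (hB : ∀ j : ℕ, j ≤ s → ∫ θ in (-Real.pi)..Real.pi, F θ * Real.sin (j*θ) = 0) :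
    ∫ θ in (-Real.pi)..Real.pi,
      F θ * (∏ k ∈ Finset.range (2*s), Real.sin ((θ - t k)/2)) = 0 := by
  set n := 2*s with hns
  set w : ℕ → ℂ := fun k => Complex.exp (Complex.I * (t k)) with hw
  set p : Polynomial ℂ := ∏ k ∈ Finset.range n, (Polynomial.X - Polynomial.C (w k)) with hp
  have hpd : p.natDegree = n := by
    rw [hp, Polynomial.natDegree_prod]
    · simp [Polynomial.natDegree_X_sub_C]
    · intro i _; exact Polynomial.X_sub_C_ne_zero _
  have hpe : ∀ z : ℂ, ∏ k ∈ Finset.range n, (z - w k)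
      = ∑ m ∈ Finset.range (n+1), p.coeff m * z^m := by
    intro z
    have h1 : p.eval z = ∏ k ∈ Finset.range n, (z - w k) := by
      simp [hp, Polynomial.eval_prod]
    rw [← h1, Polynomial.eval_eq_sum_range, hpd]
  set E : ℂ := Complex.exp (-(Complex.I) * ((∑ k ∈ Finset.range n, t k : ℝ):ℂ) / 2)
      * (1/(2*Complex.I))^n with hE
  have hpt : ∀ θ : ℝ, ((F θ * ∏ k ∈ Finset.range n, Real.sin ((θ - t k)/2) : ℝ):ℂ)
      = ∑ m ∈ Finset.range (n+1), (E * p.coeff m) *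
          ((F θ:ℂ) * Complex.exp (Complex.I * ((((m:ℤ) - (s:ℤ)):ℤ):ℂ) * θ)) := by
    intro θ
    rw [Complex.ofReal_mul, prodExpand n t θ, hpe]
    rw [show Complex.exp (-(Complex.I) * ((∑ k ∈ Finset.range n, t k : ℝ):ℂ) / 2)
        * (1/(2*Complex.I))^n * Complex.exp (-(Complex.I) * ((n:ℂ)/2) * θ)
        * (∑ m ∈ Finset.range (n+1), p.coeff m * (Complex.exp (Complex.I * θ))^m)
      = ∑ m ∈ Finset.range (n+1), E * Complex.exp (-(Complex.I) * ((n:ℂ)/2) * θ)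
          * (p.coeff m * (Complex.exp (Complex.I * θ))^m) by
        rw [Finset.mul_sum]]
    rw [Finset.mul_sum]
    apply Finset.sum_congr rfl
    intro m _
    have hz : (Complex.exp (Complex.I * θ))^m * Complex.exp (-(Complex.I) * ((n:ℂ)/2) * θ)
        = Complex.exp (Complex.I * ((((m:ℤ) - (s:ℤ)):ℤ):ℂ) * θ) := by
      rw [← Complex.exp_nat_mul, ← Complex.exp_add]
      congr 1
      rw [hns]
      push_cast
      ring
    rw [← hz]
    ring
  have h0 : ∫ θ in (-Real.pi)..Real.pi,
      ((F θ * ∏ k ∈ Finset.range n, Real.sin ((θ - t k)/2) : ℝ):ℂ) = 0 := by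
    rw [intervalIntegral.integral_congr (g := fun θ => ∑ m ∈ Finset.range (n+1),
        (E * p.coeff m) * ((F θ:ℂ) * Complex.exp (Complex.I * ((((m:ℤ) - (s:ℤ)):ℤ):ℂ) * θ)))
      (fun θ _ => hpt θ)]
    rw [intervalIntegral.integral_finset_sum]
    · apply Finset.sum_eq_zero
      intro m hm
      rw [intervalIntegral.integral_const_mul,
        integralZeroExp F hF s hA hB ((m:ℤ) - (s:ℤ))
          (by simp only [Finset.mem_range] at hm; omega), mul_zero]
    · intro m _
      exact ((continuous_const.mul ((Complex.continuous_ofReal.comp hF).mul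
        (Complex.continuous_exp.comp
          (continuous_const.mul Complex.continuous_ofReal)))).intervalIntegrable _ _)
  rwa [intervalIntegral.integral_ofReal, Complex.ofReal_eq_zero] at h0

lemma tStrict (N : ℕ) (t : ℕ → ℝ) (ht : ∀ k < N, t k < t (k+1)) :
    ∀ j k, j < k → k ≤ N → t j < t k := by
  intro j k hjk hkN
  induction k with
  | zero => omega
  | succ k ih =>
    rcases Nat.lt_succ_iff_lt_or_eq.mp hjk with h | h
    · exact (ih h (by omega)).trans (ht k (by omega))
    · rw [h]; exact ht k (by omega)

lemma gSign (s : ℕ) (t : ℕ → ℝ) (ht : ∀ k < 2*s, t k < t (k+1))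
    (htop : t (2*s) = t 0 + 2*Real.pi) (k : ℕ) (hk : k < 2*s)
    (θ : ℝ) (hθ : θ ∈ Set.Ioo (t k) (t (k+1))) :
    0 < (-1:ℝ)^(k+1) * ∏ j ∈ Finset.range (2*s), Real.sin ((θ - t j)/2) := by
  have tmono : ∀ j k, j ≤ k → k ≤ 2*s → t j ≤ t k := by
    intro j k hjk hkN
    rcases eq_or_lt_of_le hjk with h | h
    · rw [h]
    · exact (tStrict (2*s) t ht j k h hkN).le
  obtain ⟨hθ1, hθ2⟩ := hθ
  have hsplit : Finset.range (2*s) = Finset.Ico 0 (k+1) ∪ Finset.Ico (k+1) (2*s) := by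
    rw [Finset.range_eq_Ico, Finset.Ico_union_Ico_eq_Ico (by omega) (by omega)]
  have hdisj : Disjoint (Finset.Ico 0 (k+1)) (Finset.Ico (k+1) (2*s)) := by
    apply Finset.Ico_disjoint_Ico_consecutive
  rw [hsplit, Finset.prod_union hdisj]
  have hP1 : 0 < ∏ j ∈ Finset.Ico 0 (k+1), Real.sin ((θ - t j)/2) := by
    apply Finset.prod_pos
    intro j hj
    simp only [Finset.mem_Ico] at hj
    have h1 : t j ≤ t k := tmono j k (by omega) (by omega)
    have h2 : t (k+1) ≤ t (2*s) := tmono (k+1) (2*s) (by omega) le_rfl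
    have h3 : t 0 ≤ t j := tmono 0 j (by omega) (by omega)
    apply Real.sin_pos_of_pos_of_lt_pi
    · linarith
    · have : θ - t j < 2 * Real.pi := by rw [htop] at h2; linarith
      linarith
  have hP2 : ∀ j ∈ Finset.Ico (k+1) (2*s), Real.sin ((θ - t j)/2) < 0 := by
    intro j hj
    simp only [Finset.mem_Ico] at hj
    have h1 : t (k+1) ≤ t j := tmono (k+1) j hj.1 (by omega)
    have h2 : t j < t (2*s) := tStrict (2*s) t ht j (2*s) hj.2 le_rfl
    have h3 : t 0 ≤ t k := tmono 0 k (by omega) (by omega)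
    apply Real.sin_neg_of_neg_of_neg_pi_lt
    · linarith
    · have : -(2*Real.pi) < θ - t j := by rw [htop] at h2; linarith
      linarith
  have hcard : (Finset.Ico (k+1) (2*s)).card = 2*s - (k+1) := Nat.card_Ico _ _
  have hP2' : ∏ j ∈ Finset.Ico (k+1) (2*s), Real.sin ((θ - t j)/2)
      = (-1:ℝ)^(2*s - (k+1)) * ∏ j ∈ Finset.Ico (k+1) (2*s), (-Real.sin ((θ - t j)/2)) := by
    rw [Finset.prod_congr rfl (fun j _ => show Real.sin ((θ - t j)/2)
        = (-1) * (-Real.sin ((θ - t j)/2)) by ring), Finset.prod_mul_distrib,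
      Finset.prod_const, hcard]
  rw [hP2']
  have hQ : 0 < ∏ j ∈ Finset.Ico (k+1) (2*s), (-Real.sin ((θ - t j)/2)) := by
    apply Finset.prod_pos
    intro j hj
    linarith [hP2 j hj]
  have hsign : (-1:ℝ)^(k+1) * (-1:ℝ)^(2*s-(k+1)) = 1 := by
    rw [← pow_add, show k+1 + (2*s - (k+1)) = 2*s by omega, pow_mul]
    norm_num
  calc (0:ℝ) < ((∏ j ∈ Finset.Ico 0 (k+1), Real.sin ((θ - t j)/2)) *
        ∏ j ∈ Finset.Ico (k+1) (2*s), (-Real.sin ((θ - t j)/2))) := mul_pos hP1 hQ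
    _ = (-1:ℝ)^(k+1) * ((∏ j ∈ Finset.Ico 0 (k+1), Real.sin ((θ - t j)/2)) *
        ((-1:ℝ)^(2*s - (k+1)) * ∏ j ∈ Finset.Ico (k+1) (2*s), (-Real.sin ((θ - t j)/2)))) := by
      rw [show (-1:ℝ)^(k+1) * ((∏ j ∈ Finset.Ico 0 (k+1), Real.sin ((θ - t j)/2)) *
        ((-1:ℝ)^(2*s - (k+1)) * ∏ j ∈ Finset.Ico (k+1) (2*s), (-Real.sin ((θ - t j)/2))))
        = ((-1:ℝ)^(k+1) * (-1:ℝ)^(2*s-(k+1))) * ((∏ j ∈ Finset.Ico 0 (k+1), Real.sin ((θ - t j)/2)) *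
          ∏ j ∈ Finset.Ico (k+1) (2*s), (-Real.sin ((θ - t j)/2))) by ring, hsign, one_mul]

theorem first_nonzero_fourier_mode (s : ℕ) (hs : 1 ≤ s) (f : ℂ → ℝ)
    (hcont : ContinuousOn f (Metric.sphere (0 : ℂ) 1))
    (halt : AltBoundary f s)
    (hA : ∀ j < s, fourierA f j = 0)
    (hB : ∀ j, 1 ≤ j → j < s → fourierB f j = 0) :
    ¬ (fourierA f s = 0 ∧ fourierB f s = 0) := by
  rintro ⟨hAs, hBs⟩
  obtain ⟨t, ε, hε, ht, htop, -, hsign⟩ := halt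
  set F : ℝ → ℝ := fun θ => f (Complex.exp (Complex.I * (θ:ℂ))) with hFdef
  have hFcont : Continuous F := contF f hcont
  have hπ : (1/Real.pi : ℝ) ≠ 0 := one_div_ne_zero Real.pi_ne_zero
  have hAconv : ∀ j : ℕ, fourierA f j = 0 →
      ∫ θ in (-Real.pi)..Real.pi, F θ * Real.cos (j*θ) = 0 := by
    intro j h
    rw [fourierA] at h
    rcases mul_eq_zero.mp h with h' | h'
    · exact absurd h' hπ
    · exact h'
  have hBconv : ∀ j : ℕ, fourierB f j = 0 →
      ∫ θ in (-Real.pi)..Real.pi, F θ * Real.sin (j*θ) = 0 := by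
    intro j h
    rw [fourierB] at h
    rcases mul_eq_zero.mp h with h' | h'
    · exact absurd h' hπ
    · exact h'
  have hA' : ∀ j : ℕ, j ≤ s → ∫ θ in (-Real.pi)..Real.pi, F θ * Real.cos (j*θ) = 0 := by
    intro j hj
    rcases eq_or_lt_of_le hj with h | h
    · rw [h]; exact hAconv s hAs
    · exact hAconv j (hA j h)
  have hB' : ∀ j : ℕ, j ≤ s → ∫ θ in (-Real.pi)..Real.pi, F θ * Real.sin (j*θ) = 0 := by
    intro j hj
    rcases Nat.eq_zero_or_pos j with h0 | h0
    · subst h0; simp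
    rcases eq_or_lt_of_le hj with h | h
    · rw [h]; exact hBconv s hBs
    · exact hBconv j (hB j h0 h)
  have hkey := keyIntegralZero F hFcont s t hA' hB'
  set g : ℝ → ℝ := fun θ => ∏ k ∈ Finset.range (2*s), Real.sin ((θ - t k)/2) with hg
  have hkey' : ∫ θ in (-Real.pi)..Real.pi, F θ * g θ = 0 := hkey
  have hgcont : Continuous g := by
    apply continuous_finset_prod
    intro k _
    exact Real.continuous_sin.comp ((continuous_id.sub continuous_const).div_const 2)
  have hFgcont : Continuous (fun θ => F θ * g θ) := hFcont.mul hgcont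
  have hper : Function.Periodic (fun θ => F θ * g θ) (2*Real.pi) := by
    intro θ
    have hFp : F (θ + 2*Real.pi) = F θ := congrArg f (periodicExp θ)
    have hgp : g (θ + 2*Real.pi) = g θ := by
      simp only [hg]
      rw [Finset.prod_congr rfl (fun k _ => show Real.sin ((θ + 2*Real.pi - t k)/2)
          = (-1) * Real.sin ((θ - t k)/2) by
        rw [show (θ + 2*Real.pi - t k)/2 = (θ - t k)/2 + Real.pi by ring, Real.sin_add_pi]
        ring)]
      rw [Finset.prod_mul_distrib, Finset.prod_const, Finset.card_range, pow_mul]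
      norm_num
    simp only []
    rw [hFp, hgp]
  have hshift : (∫ θ in (t 0)..(t 0 + 2*Real.pi), F θ * g θ)
      = ∫ θ in (-Real.pi)..(-Real.pi + 2*Real.pi), F θ * g θ :=
    hper.intervalIntegral_add_eq (t 0) (-Real.pi)
  rw [show -Real.pi + 2*Real.pi = Real.pi by ring] at hshift
  have hsum : ∑ k ∈ Finset.range (2*s), ∫ θ in (t k)..(t (k+1)), F θ * g θ
      = ∫ θ in (t 0)..(t (2*s)), F θ * g θ :=
    intervalIntegral.sum_integral_adjacent_intervals (fun k _ => hFgcont.intervalIntegrable _ _)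
  have harc : ∀ k ∈ Finset.range (2*s),
      0 < (-ε) * ∫ θ in (t k)..(t (k+1)), F θ * g θ := by
    intro k hk
    simp only [Finset.mem_range] at hk
    rw [← intervalIntegral.integral_const_mul]
    apply intervalIntegral.intervalIntegral_pos_of_pos_on
    · exact (continuous_const.mul hFgcont).intervalIntegrable _ _
    · intro x hx
      have h1 : 0 < ε * (-1:ℝ)^k * F x := hsign k hk x hx
      have h2 : 0 < (-1:ℝ)^(k+1) * g x := gSign s t ht htop k hk x hx
      have hpow : (-1:ℝ)^k * (-1:ℝ)^(k+1) = -1 := by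
        rw [← pow_add]; exact Odd.neg_one_pow ⟨k, by omega⟩
      have heq : (ε * (-1:ℝ)^k * F x) * ((-1:ℝ)^(k+1) * g x) = -ε * (F x * g x) := by
        linear_combination (ε * F x * g x) * hpow
      exact heq ▸ mul_pos h1 h2
    · exact ht k hk
  have hpos : 0 < ∑ k ∈ Finset.range (2*s),
      (-ε) * ∫ θ in (t k)..(t (k+1)), F θ * g θ :=
    Finset.sum_pos harc (Finset.nonempty_range_iff.mpr (by omega))
  rw [← Finset.mul_sum, hsum, htop, hshift, hkey', mul_zero] at hpos
  exact lt_irrefl 0 hpos
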